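/- Let R be a commutative ring, P₀ a finitely generated projective R-module of rank 2, n ≥ 4, and P_n = P₀ ⊕ Re₃ ⊕ ⋯ ⊕ Re_n. Let a = (a₀, a₃, …, a_n) ∈ Um(P_n) and let I = ⟨a₄, …, a_n⟩ ⊆ R. Let b = (b₀, b₃) and b' = (b'₀, b'₃) be R-linear maps P₃ = P₀ ⊕ Re₃ → R such that (b − b')(P₃) ⊆ I and such that the induced map P₃/IP₃ → R/I of b is surjective. Then the R-linear map (b₀, b₃, a₄, …, a_n) : P_n → R is surjective, and there exists φ ∈ E(P_n) such that (b'₀, b'₃, a₄, …, a_n) ∘ φ = (b₀, b₃, a₄, …, a_n). -/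

import Mathlib

open Function

section Defs

variable (R : Type*) [CommRing R] (M : Type*) [AddCommGroup M] [Module R M] (m : ℕ)

/-- `Pn R M m` models `P_n = P₀ ⊕ Re₃ ⊕ ⋯ ⊕ Re_n` with `m = n - 2` free summands. -/
abbrev Pn := M × (Fin m → R)

/-- Projection onto `P₀`. -/
def proj0 : Pn R M m →ₗ[R] M := LinearMap.fst R M (Fin m → R)

/-- Projection `π_{k,n}` onto the `i`-th free summand. -/
def projF (i : Fin m) : Pn R M m →ₗ[R] R :=
  (LinearMap.proj i).comp (LinearMap.snd R M (Fin m → R))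

/-- Inclusion of `P₀`. -/
def incl0 : M →ₗ[R] Pn R M m := LinearMap.inl R M (Fin m → R)

/-- Inclusion of the `i`-th free summand. -/
def inclF (i : Fin m) : R →ₗ[R] Pn R M m :=
  (LinearMap.inr R M (Fin m → R)).comp (LinearMap.single R (fun _ => R) i)

/-- An endomorphism is elementary if it is `id + s` where `s` maps one direct
summand of `P₀ ⊕ Re₃ ⊕ ⋯ ⊕ Re_n` into a different one. -/
def IsElementary (φ : Module.End R (Pn R M m)) : Prop :=
  (∃ i : Fin m, ∃ t : M →ₗ[R] R, φ = LinearMap.id + (inclF R M m i) ∘ₗ t ∘ₗ (proj0 R M m)) ∨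
  (∃ i : Fin m, ∃ t : R →ₗ[R] M, φ = LinearMap.id + (incl0 R M m) ∘ₗ t ∘ₗ (projF R M m i)) ∨
  (∃ i j : Fin m, i ≠ j ∧ ∃ t : R →ₗ[R] R,
    φ = LinearMap.id + (inclF R M m i) ∘ₗ t ∘ₗ (projF R M m j))

/-- `E(P_n)`: the subgroup of `Aut(P_n)` generated by elementary automorphisms. -/
def Elem : Subgroup (Module.End R (Pn R M m))ˣ :=
  Subgroup.closure { φ : (Module.End R (Pn R M m))ˣ | IsElementary R M m ↑φ }

/-- The `i`-th free coordinate `a_i = a(e_i)` of a linear map `a : P_n → R`. -/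
def coord (a : Pn R M m →ₗ[R] R) (i : Fin m) : R := a (inclF R M m i 1)

/-- The map obtained from `a` by replacing its `i`-th free coordinate by `c`. -/
def replace (a : Pn R M m →ₗ[R] R) (i : Fin m) (c : R) : Pn R M m →ₗ[R] R :=
  a + (c - coord R M m a i) • projF R M m i

/-- A module has rank two if its localization at every prime has rank two. -/
def RankTwo : Prop :=
  ∀ (p : Ideal R) (_ : p.IsPrime),
    Module.finrank (Localization.AtPrime p) (LocalizedModule p.primeCompl M) = 2

/-- Given `b = (b₀, b₃) : P₃ → R` and `a : P_n → R`, the map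
`(b₀, b₃, a₄, …, a_n) : P_n → R`. -/
def combine (h : 0 < m) (b : M × R →ₗ[R] R) (a : Pn R M m →ₗ[R] R) :
    Pn R M m →ₗ[R] R :=
  b ∘ₗ (LinearMap.prod (proj0 R M m) (projF R M m ⟨0, h⟩)) +
    ∑ i ∈ Finset.univ.erase (⟨0, h⟩ : Fin m), coord R M m a i • projF R M m i

end Defs

/-! Modulo `I` the map `(b₀, b₃, a₄, …, a_n)` agrees with `b`, and `I` is spanned by its values
`a₄, …, a_n` on `e₄, …, e_n`; hence it is surjective. Since `P₃` is projective, `b - b' : P₃ → I`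
lifts along `(r₄, …, r_n) ↦ Σ aᵢ rᵢ` to some `(D₄, …, D_n) : P₃ → R^{n-3}`, and
`φ = id + Σᵢ eᵢ · (Dᵢ ∘ π₃)`, with `π₃ : P_n → P₃` the projection, does the job. Because `π₃`
kills `e₄, …, e_n`, all the summands multiply to zero, so `φ` is the product of the
`id + eᵢ · (Dᵢ ∘ π₃)`, and each of these is the product of an elementary map `P₀ → Reᵢ` and an
elementary map `Re₃ → Reᵢ`. -/

theorem one_add_mul_one_add_of_mul_eq_zero {A : Type*} [Semiring A] {s t : A}
    (h : s * t = 0) : (1 + s) * (1 + t) = 1 + (s + t) := by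
  rw [add_mul, one_mul, mul_add, mul_one, h, add_zero, add_assoc, add_comm t s]

theorem Submonoid.one_add_sum_mem_of_mul_eq_zero {A : Type*} [Semiring A] (K : Submonoid A)
    {ι : Type*} [DecidableEq ι] (s : ι → A) (T : Finset ι)
    (hs : ∀ i ∈ T, ∀ j ∈ T, s i * s j = 0) (hK : ∀ i ∈ T, 1 + s i ∈ K) :
    1 + ∑ i ∈ T, s i ∈ K := by
  induction T using Finset.induction_on with
  | empty => simp [K.one_mem]
  | @insert k T hk ih =>
    have hzero : s k * ∑ i ∈ T, s i = 0 := by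
      rw [Finset.mul_sum]
      exact Finset.sum_eq_zero fun i hi =>
        hs k (T.mem_insert_self k) i (Finset.mem_insert_of_mem hi)
    rw [Finset.sum_insert hk, ← one_add_mul_one_add_of_mul_eq_zero hzero]
    exact K.mul_mem (hK k (T.mem_insert_self k)) <|
      ih (fun i hi j hj => hs i (Finset.mem_insert_of_mem hi) j (Finset.mem_insert_of_mem hj))
        (fun i hi => hK i (Finset.mem_insert_of_mem hi))

theorem Module.Projective.exists_comp_eq_of_range_le {R : Type*} [Semiring R]
    {P : Type*} [AddCommMonoid P] [Module R P] [Module.Projective R P]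
    {M : Type*} [AddCommMonoid M] [Module R M] {N : Type*} [AddCommMonoid N] [Module R N]
    (f : N →ₗ[R] M) (g : P →ₗ[R] M) (hg : LinearMap.range g ≤ LinearMap.range f) :
    ∃ h : P →ₗ[R] N, f ∘ₗ h = g := by
  obtain ⟨h, hh⟩ := Module.projective_lifting_property f.rangeRestrict
    (g.codRestrict _ fun x => hg ⟨x, rfl⟩) f.surjective_rangeRestrict
  exact ⟨h, LinearMap.ext fun x => congrArg Subtype.val (LinearMap.congr_fun hh x)⟩

theorem LinearMap.comp_comp_mul_comp_comp_eq_zero {R : Type*} [Semiring R]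
    {N X Y X' Y' : Type*} [AddCommMonoid N] [Module R N] [AddCommMonoid X] [Module R X]
    [AddCommMonoid Y] [Module R Y] [AddCommMonoid X'] [Module R X'] [AddCommMonoid Y'] [Module R Y']
    (f : X →ₗ[R] N) (u : Y →ₗ[R] X) (q : N →ₗ[R] Y)
    (f' : X' →ₗ[R] N) (u' : Y' →ₗ[R] X') (q' : N →ₗ[R] Y') (h : q ∘ₗ f' = 0) :
    (f ∘ₗ u ∘ₗ q) * (f' ∘ₗ u' ∘ₗ q') = 0 := by
  ext x
  simp [Module.End.mul_apply, ← LinearMap.comp_apply q f', h]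

section Elementary

variable {R : Type*} [CommRing R] {M : Type*} [AddCommGroup M] [Module R M] {m : ℕ}

variable (R M m) in
def elemEnd : Submonoid (Module.End R (Pn R M m)) :=
  (Elem R M m).toSubmonoid.map (Units.coeHom _)

theorem one_add_mem_elemEnd {s : Module.End R (Pn R M m)} (hs : s * s = 0)
    (he : IsElementary R M m (1 + s)) : 1 + s ∈ elemEnd R M m :=
  have hu : IsUnit (1 + s) := IsNilpotent.isUnit_one_add ⟨2, by rw [pow_two, hs]⟩
  ⟨hu.unit, Subgroup.subset_closure he, rfl⟩

theorem projF_comp_inclF_of_ne {i j : Fin m} (hij : i ≠ j) :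
    projF R M m j ∘ₗ inclF R M m i = 0 :=
  LinearMap.ext fun r => Pi.single_eq_of_ne (M := fun _ => R) hij.symm r

variable (R M) in
def toP3 (h : 0 < m) : Pn R M m →ₗ[R] M × R :=
  LinearMap.prod (proj0 R M m) (projF R M m ⟨0, h⟩)

theorem toP3_comp_inclF {h : 0 < m} {i : Fin m} (hi : i ≠ ⟨0, h⟩) :
    toP3 R M h ∘ₗ inclF R M m i = 0 :=
  LinearMap.ext fun r => Prod.ext rfl (LinearMap.congr_fun (projF_comp_inclF_of_ne (M := M) hi) r)

theorem one_add_inclF_comp_toP3_mem_elemEnd {h : 0 < m} {i : Fin m} (hi : i ≠ ⟨0, h⟩)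
    (t : M × R →ₗ[R] R) : 1 + inclF R M m i ∘ₗ t ∘ₗ toP3 R M h ∈ elemEnd R M m := by
  set A := inclF R M m i ∘ₗ (t ∘ₗ LinearMap.inl R M R) ∘ₗ proj0 R M m
  set B := inclF R M m i ∘ₗ (t ∘ₗ LinearMap.inr R M R) ∘ₗ projF R M m ⟨0, h⟩
  have hsplit : inclF R M m i ∘ₗ t ∘ₗ toP3 R M h = A + B := by
    ext x <;> simp [A, B, toP3, ← map_add]
  have hAB : A * B = 0 := LinearMap.comp_comp_mul_comp_comp_eq_zero _ _ _ _ _ _ rfl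
  have hA : 1 + A ∈ elemEnd R M m :=
    one_add_mem_elemEnd (LinearMap.comp_comp_mul_comp_comp_eq_zero _ _ _ _ _ _ rfl)
      (Or.inl ⟨i, _, rfl⟩)
  have hB : 1 + B ∈ elemEnd R M m :=
    one_add_mem_elemEnd
      (LinearMap.comp_comp_mul_comp_comp_eq_zero _ _ _ _ _ _ (projF_comp_inclF_of_ne hi))
      (Or.inr (Or.inr ⟨i, _, hi, _, rfl⟩))
  rw [hsplit, ← one_add_mul_one_add_of_mul_eq_zero hAB]
  exact (elemEnd R M m).mul_mem hA hB

end Elementary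

section Combine

variable {R : Type*} [CommRing R] {M : Type*} [AddCommGroup M] [Module R M] {m : ℕ}
  (h : 0 < m) (a : Pn R M m →ₗ[R] R)

def tailIdeal : Ideal R :=
  Ideal.span {x : R | ∃ i : Fin m, i ≠ ⟨0, h⟩ ∧ x = coord R M m a i}

def tail : (Fin m → R) →ₗ[R] R :=
  ∑ i ∈ Finset.univ.erase ⟨0, h⟩, coord R M m a i • LinearMap.proj i

theorem tail_apply (r : Fin m → R) :
    tail h a r = ∑ i ∈ Finset.univ.erase ⟨0, h⟩, coord R M m a i * r i := by
  simp [tail]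

theorem tail_single {i : Fin m} (hi : i ≠ ⟨0, h⟩) (r : R) :
    tail h a (Pi.single i r) = coord R M m a i * r := by
  rw [tail_apply, Finset.sum_eq_single_of_mem i (by simpa using hi) fun j _ hji => by
    simp [Pi.single_eq_of_ne hji]]
  simp

theorem tail_single_zero (r : R) : tail h a (Pi.single ⟨0, h⟩ r) = 0 := by
  rw [tail_apply]
  exact Finset.sum_eq_zero fun i hi => by simp [Pi.single_eq_of_ne (Finset.ne_of_mem_erase hi)]

theorem tailIdeal_le_range_tail : tailIdeal h a ≤ LinearMap.range (tail h a) := by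
  refine Ideal.span_le.mpr ?_
  rintro _ ⟨i, hi, rfl⟩
  exact ⟨Pi.single i 1, by rw [tail_single h a hi, mul_one]⟩

theorem combine_eq (b : M × R →ₗ[R] R) :
    combine R M m h b a = b ∘ₗ toP3 R M h + tail h a ∘ₗ LinearMap.snd R M (Fin m → R) := by
  refine LinearMap.ext fun x => ?_
  simp [combine, tail, toP3, projF, LinearMap.sum_apply]

theorem combine_sub_combine (b b' : M × R →ₗ[R] R) :
    combine R M m h b a - combine R M m h b' a = (b - b') ∘ₗ toP3 R M h := by
  rw [combine_eq, combine_eq, LinearMap.sub_comp]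
  abel

theorem combine_inclF (b : M × R →ₗ[R] R) {i : Fin m} (hi : i ≠ ⟨0, h⟩) (r : R) :
    combine R M m h b a (inclF R M m i r) = coord R M m a i * r := by
  have hb : b (toP3 R M h (inclF R M m i r)) = 0 := by
    rw [← LinearMap.comp_apply (toP3 R M h), toP3_comp_inclF hi, LinearMap.zero_apply, map_zero]
  rw [combine_eq, LinearMap.add_apply, LinearMap.comp_apply, hb, zero_add]
  exact tail_single h a hi r

theorem combine_surjective (b : M × R →ₗ[R] R)
    (hb : Function.Surjective (Ideal.Quotient.mk (tailIdeal h a) ∘ b)) :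
    Function.Surjective (combine R M m h b a) := by
  have hI : tailIdeal h a ≤ LinearMap.range (combine R M m h b a) := by
    refine Ideal.span_le.mpr ?_
    rintro _ ⟨i, hi, rfl⟩
    exact ⟨inclF R M m i 1, by rw [combine_inclF h a b hi, mul_one]⟩
  have hb_mem : ∀ x, b x ∈ LinearMap.range (combine R M m h b a) := fun x =>
    ⟨(x.1, Pi.single ⟨0, h⟩ x.2), by simp [combine_eq, toP3, proj0, projF, tail_single_zero]⟩
  rw [← LinearMap.range_eq_top, eq_top_iff]
  intro y _
  obtain ⟨x, hx⟩ := hb (Ideal.Quotient.mk _ y)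
  have hyx : y - b x ∈ tailIdeal h a := Ideal.Quotient.eq.mp hx.symm
  simpa using add_mem (hI hyx) (hb_mem x)

theorem exists_mem_elem_combine_comp_eq [Module.Projective R M] (b b' : M × R →ₗ[R] R)
    (hdiff : ∀ x, b x - b' x ∈ tailIdeal h a) :
    ∃ φ ∈ Elem R M m, combine R M m h b' a ∘ₗ (φ : Module.End R (Pn R M m)) =
      combine R M m h b a := by
  obtain ⟨D, hD⟩ := Module.Projective.exists_comp_eq_of_range_le (tail h a) (b - b') <| by
    rintro _ ⟨x, rfl⟩
    exact tailIdeal_le_range_tail h a (hdiff x)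
  set T := Finset.univ.erase (⟨0, h⟩ : Fin m)
  set s : Fin m → Module.End R (Pn R M m) :=
    fun i => inclF R M m i ∘ₗ (LinearMap.proj i ∘ₗ D) ∘ₗ toP3 R M h
  have hmem : 1 + ∑ i ∈ T, s i ∈ elemEnd R M m :=
    Submonoid.one_add_sum_mem_of_mul_eq_zero _ s T
      (fun i _ j hj => LinearMap.comp_comp_mul_comp_comp_eq_zero _ _ _ _ _ _
        (toP3_comp_inclF (Finset.ne_of_mem_erase hj)))
      (fun i hi => one_add_inclF_comp_toP3_mem_elemEnd (Finset.ne_of_mem_erase hi) _)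
  obtain ⟨φ, hφ, hφs⟩ := hmem
  have hs : combine R M m h b' a ∘ₗ ∑ i ∈ T, s i = (b - b') ∘ₗ toP3 R M h := by
    refine LinearMap.ext fun x => ?_
    simp only [LinearMap.comp_apply, LinearMap.sum_apply, map_sum, s]
    rw [← hD, LinearMap.comp_apply, tail_apply]
    exact Finset.sum_congr rfl fun i hi => combine_inclF h a b' (Finset.ne_of_mem_erase hi) _
  refine ⟨φ, hφ, ?_⟩
  rw [← Units.coeHom_apply, hφs, LinearMap.comp_add, hs, ← combine_sub_combine h a b b']
  exact add_sub_cancel _ _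

end Combine

/-- Let `R` be a commutative ring, `P₀` a finitely generated projective
`R`-module of rank `2`, `n ≥ 4` and `P_n = P₀ ⊕ Re₃ ⊕ ⋯ ⊕ Re_n`. Let
`a = (a₀, a₃, …, a_n) : P_n → R` be surjective and `I = ⟨a₄, …, a_n⟩`. Let
`b = (b₀, b₃), b' = (b'₀, b'₃) : P₃ = P₀ ⊕ Re₃ → R` be such that `(b - b')(P₃) ⊆ I` and
the induced map `P₃/IP₃ → R/I` of `b` is surjective. Then `(b₀, b₃, a₄, …, a_n)` is
surjective and there is `φ ∈ E(P_n)` with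
`(b'₀, b'₃, a₄, …, a_n) ∘ φ = (b₀, b₃, a₄, …, a_n)`. -/
theorem statement8 (R : Type*) [CommRing R] (P₀ : Type*) [AddCommGroup P₀] [Module R P₀]
    [Module.Projective R P₀]
    (n : ℕ) (hn : 4 ≤ n) (a : Pn R P₀ (n - 2) →ₗ[R] R)
    (I : Ideal R)
    (hI : I = Ideal.span {x : R | ∃ i : Fin (n - 2), i ≠ ⟨0, by omega⟩ ∧
      x = coord R P₀ (n - 2) a i})
    (b b' : P₀ × R →ₗ[R] R)
    (hdiff : ∀ x : P₀ × R, b x - b' x ∈ I)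
    (hbsurj : Function.Surjective ((Ideal.Quotient.mk I) ∘ b)) :
    Function.Surjective (combine R P₀ (n - 2) (by omega) b a) ∧
      ∃ φ ∈ Elem R P₀ (n - 2),
        (combine R P₀ (n - 2) (by omega) b' a) ∘ₗ (φ : Module.End R (Pn R P₀ (n - 2))) =
          combine R P₀ (n - 2) (by omega) b a := by
  subst hI
  exact ⟨combine_surjective _ a b hbsurj, exists_mem_elem_combine_comp_eq _ a b b' hdiff⟩
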